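/- arXiv:math/0609425 — 3 statements merged into one kernel-verified Lean document; each statement's English description precedes it below -/
import Mathlib

section
/- Let G be a finite connected simple graph on n vertices with maximum degree Δ. Then aut(G) ≤ n · Δ! · (Δ − 1)^{n − Δ − 1}. -/
/-!
Root a breadth-first search tree at a vertex `v` of maximum degree `Δ`. An automorphism `φ` is
determined by `φ v` (at most `n` choices), by where it sends the `Δ` neighbours of `v` (injectively
into the `Δ` neighbours of `φ v`, at most `Δ!` choices), and then, for each of the remaining
`n - Δ - 1` vertices `u` with parent `a` and grandparent `b`, by `φ u`, which is a neighbour of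
`φ a` other than `φ b` (at most `Δ - 1` choices). Listing each set of choices, `φ` is encoded
injectively by indices into a product of size `n · Δ! · (Δ - 1)^(n - Δ - 1)`.
-/

open Finset

lemma Finset.idxOf_toList_lt_card {α : Type*} [DecidableEq α] {s : Finset α} {x : α}
    (hx : x ∈ s) : s.toList.idxOf x < #s := by
  simpa using List.idxOf_lt_length_iff.mpr (mem_toList.mpr hx)

lemma Finset.idxOf_toList_inj {α : Type*} [DecidableEq α] {s : Finset α} {x y : α}
    (hx : x ∈ s) : s.toList.idxOf x = s.toList.idxOf y ↔ x = y :=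
  List.idxOf_inj (mem_toList.mpr hx)

namespace SimpleGraph

variable {V : Type*} {G : SimpleGraph V} {u v : V}

variable (G) in
/-- A neighbour of `u` one step closer to `v` in a shortest path; `v` itself if there is none,
in particular if `u = v`. -/
noncomputable def stepToward (v u : V) : V :=
  open Classical in
  if h : ∃ w, G.Adj u w ∧ G.dist w v + 1 = G.dist u v then h.choose else v

lemma Connected.exists_adj_dist_add_one (hG : G.Connected) (huv : u ≠ v) :
    ∃ w, G.Adj u w ∧ G.dist w v + 1 = G.dist u v := by
  obtain ⟨p, hp⟩ := exists_walk_of_dist_ne_zero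
    (dist_ne_zero_iff_ne_and_reachable.mpr ⟨huv, hG u v⟩)
  cases p with
  | nil => exact absurd rfl huv
  | @cons _ w _ hadj q =>
    have hq : G.dist w v ≤ q.length := dist_le q
    have htri : G.dist u v ≤ G.dist u w + G.dist w v := hG.dist_triangle
    rw [dist_eq_one_iff_adj.mpr hadj] at htri
    rw [Walk.length_cons] at hp
    exact ⟨w, hadj, by omega⟩

@[simp] lemma stepToward_self : G.stepToward v v = v := by
  simp [stepToward]

lemma Connected.adj_stepToward (hG : G.Connected) (huv : u ≠ v) : G.Adj u (G.stepToward v u) := by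
  rw [stepToward, dif_pos (hG.exists_adj_dist_add_one huv)]
  exact (hG.exists_adj_dist_add_one huv).choose_spec.1

lemma Connected.dist_stepToward_add_one (hG : G.Connected) (huv : u ≠ v) :
    G.dist (G.stepToward v u) v + 1 = G.dist u v := by
  rw [stepToward, dif_pos (hG.exists_adj_dist_add_one huv)]
  exact (hG.exists_adj_dist_add_one huv).choose_spec.2

lemma Connected.dist_stepToward_le (hG : G.Connected) (u : V) :
    G.dist (G.stepToward v u) v ≤ G.dist u v := by
  obtain rfl | huv := eq_or_ne u v
  · simp
  · have := hG.dist_stepToward_add_one huv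
    omega

lemma Connected.stepToward_eq_of_adj (hG : G.Connected) (h : G.Adj u v) :
    G.stepToward v u = v := by
  have hd := hG.dist_stepToward_add_one h.ne
  rw [dist_eq_one_iff_adj.mpr h, add_eq_right, hG.dist_eq_zero_iff] at hd
  exact hd

lemma Connected.ne_stepToward_stepToward (hG : G.Connected) (huv : u ≠ v) :
    u ≠ G.stepToward v (G.stepToward v u) := by
  intro h
  have h₁ := hG.dist_stepToward_add_one huv
  have h₂ := hG.dist_stepToward_le (v := v) (G.stepToward v u)
  rw [← h] at h₂
  omega

variable [Fintype V] [DecidableEq V] [DecidableRel G.Adj]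

variable (G) in
/-- If `u ≠ v`, then `φ u` is a neighbour of `φ a` other than `φ b`, where `a`, `b` are the next
two vertices on a shortest path from `u` to `v`. -/
noncomputable def autCandidates (v : V) (φ : G ≃g G) (u : V) : Finset V :=
  (G.neighborFinset (φ (G.stepToward v u))).erase (φ (G.stepToward v (G.stepToward v u)))

variable (G) in
noncomputable def autCode (v : V) (φ : G ≃g G) (u : V) : ℕ :=
  (G.autCandidates v φ u).toList.idxOf (φ u)

lemma Connected.apply_mem_autCandidates (hG : G.Connected) (φ : G ≃g G) (huv : u ≠ v) :
    φ u ∈ G.autCandidates v φ u := by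
  rw [autCandidates, mem_erase, mem_neighborFinset, Ne, φ.injective.eq_iff, φ.map_adj_iff]
  exact ⟨hG.ne_stepToward_stepToward huv, (hG.adj_stepToward huv).symm⟩

lemma Connected.autCandidates_of_adj (hG : G.Connected) (φ : G ≃g G) (h : G.Adj u v) :
    G.autCandidates v φ u = G.neighborFinset (φ v) := by
  rw [autCandidates, hG.stepToward_eq_of_adj h, stepToward_self]
  exact erase_eq_of_notMem (G.notMem_neighborFinset_self _)

lemma Connected.card_autCandidates_le (hG : G.Connected) (φ : G ≃g G) (huv : u ≠ v)
    (hnadj : ¬G.Adj u v) : #(G.autCandidates v φ u) ≤ G.maxDegree - 1 := by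
  have hstep : G.stepToward v u ≠ v := fun h => hnadj (h ▸ hG.adj_stepToward huv)
  rw [autCandidates, card_erase_of_mem, card_neighborFinset_eq_degree, φ.degree_eq]
  · exact Nat.sub_le_sub_right (G.degree_le_maxDegree _) 1
  · rw [mem_neighborFinset, φ.map_adj_iff]
    exact hG.adj_stepToward hstep

lemma Connected.autCode_lt (hG : G.Connected) (φ : G ≃g G) (huv : u ≠ v) :
    G.autCode v φ u < #(G.autCandidates v φ u) :=
  idxOf_toList_lt_card (hG.apply_mem_autCandidates φ huv)

/-- Induction on the distance to `v`: the candidates for `φ u` only depend on `φ` at vertices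
closer to `v`. -/
lemma Connected.aut_ext_of_autCode (hG : G.Connected) {φ ψ : G ≃g G} (hv : φ v = ψ v)
    (hcode : ∀ u ≠ v, G.autCode v φ u = G.autCode v ψ u) : φ = ψ := by
  refine RelIso.ext fun u => ?_
  induction hd : G.dist u v using Nat.strong_induction_on generalizing u with
  | _ d ih =>
  obtain rfl | huv := eq_or_ne u v
  · exact hv
  have hlt := hG.dist_stepToward_add_one huv
  have h₁ : φ (G.stepToward v u) = ψ (G.stepToward v u) := ih _ (by omega) _ rfl
  have h₂ : φ (G.stepToward v (G.stepToward v u)) = ψ (G.stepToward v (G.stepToward v u)) :=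
    ih _ (by have := hG.dist_stepToward_le (v := v) (G.stepToward v u); omega) _ rfl
  have hcand : G.autCandidates v φ u = G.autCandidates v ψ u := by
    rw [autCandidates, autCandidates, h₁, h₂]
  have := hcode u huv
  rw [autCode, autCode, hcand] at this
  exact (idxOf_toList_inj (hcand ▸ hG.apply_mem_autCandidates φ huv)).mp this

lemma Connected.autCode_lt_maxDegree_of_adj (hG : G.Connected) (φ : G ≃g G) (h : G.Adj u v) :
    G.autCode v φ u < G.maxDegree := by
  have := hG.autCode_lt φ h.ne
  rw [hG.autCandidates_of_adj φ h, card_neighborFinset_eq_degree] at this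
  exact this.trans_le (G.degree_le_maxDegree _)

lemma Connected.autCode_lt_of_not_adj (hG : G.Connected) (φ : G ≃g G) (huv : u ≠ v)
    (hnadj : ¬G.Adj u v) : G.autCode v φ u < G.maxDegree - 1 :=
  (hG.autCode_lt φ huv).trans_le (hG.card_autCandidates_le φ huv hnadj)

lemma Connected.injOn_autCode_neighborSet (hG : G.Connected) (φ : G ≃g G) :
    Set.InjOn (G.autCode v φ) (G.neighborSet v) := by
  intro u hu u' hu' h
  rw [mem_neighborSet] at hu hu'
  rw [autCode, autCode, hG.autCandidates_of_adj φ hu.symm,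
    hG.autCandidates_of_adj φ hu'.symm, idxOf_toList_inj] at h
  · exact φ.injective h
  · rw [mem_neighborFinset, φ.map_adj_iff]
    exact hu

variable (G) in
abbrev AutCodeSpace (v : V) : Type _ :=
  V × (G.neighborSet v ↪ Fin G.maxDegree) ×
    (↥(insert v (G.neighborFinset v))ᶜ → Fin (G.maxDegree - 1))

noncomputable def Connected.autEncode (hG : G.Connected) (v : V) (φ : G ≃g G) :
    G.AutCodeSpace v :=
  (φ v,
    ⟨fun u => ⟨G.autCode v φ u, hG.autCode_lt_maxDegree_of_adj φ u.2.symm⟩,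
      fun u u' h => Subtype.ext <| hG.injOn_autCode_neighborSet φ u.2 u'.2 (congrArg Fin.val h)⟩,
    fun u => ⟨G.autCode v φ u, by
      have := u.2
      simp only [mem_compl, mem_insert, mem_neighborFinset, not_or] at this
      exact hG.autCode_lt_of_not_adj φ this.1 (fun h => this.2 h.symm)⟩)

lemma Connected.autEncode_injective (hG : G.Connected) (v : V) :
    Function.Injective (hG.autEncode v) := by
  intro φ ψ h
  simp only [autEncode, Prod.mk.injEq] at h
  obtain ⟨hv, hnbr, hfar⟩ := h
  refine hG.aut_ext_of_autCode hv fun u huv => ?_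
  by_cases hadj : G.Adj v u
  · exact congrArg Fin.val (DFunLike.congr_fun hnbr ⟨u, hadj⟩)
  · have hu : u ∈ (insert v (G.neighborFinset v))ᶜ := by
      simp [huv, hadj]
    exact congrArg Fin.val (congrFun hfar ⟨u, hu⟩)

lemma card_autCodeSpace (hv : G.degree v = G.maxDegree) :
    Fintype.card (G.AutCodeSpace v) = Fintype.card V * G.maxDegree.factorial *
      (G.maxDegree - 1) ^ (Fintype.card V - G.maxDegree - 1) := by
  have hclosed : #(insert v (G.neighborFinset v)) = G.maxDegree + 1 := by
    rw [card_insert_of_notMem (G.notMem_neighborFinset_self v), card_neighborFinset_eq_degree, hv]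
  simp only [Fintype.card_prod, Fintype.card_embedding_eq, Fintype.card_fun, Fintype.card_fin,
    card_neighborSet_eq_degree, hv, Nat.descFactorial_self, Fintype.card_coe, card_compl,
    hclosed, mul_assoc, Nat.sub_sub]

end SimpleGraph

/-- For a finite connected simple graph `G` on `n` vertices with
maximum degree `Δ`, `aut(G) ≤ n · Δ! · (Δ − 1) ^ (n − Δ − 1)`. -/
theorem aut_le_of_connected {V : Type*} [Fintype V] (G : SimpleGraph V) [DecidableRel G.Adj]
    (hG : G.Connected) :
    Nat.card (G ≃g G) ≤
      Fintype.card V * Nat.factorial G.maxDegree *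
        (G.maxDegree - 1) ^ (Fintype.card V - G.maxDegree - 1) := by
  classical
  have := hG.nonempty
  obtain ⟨v, hv⟩ := G.exists_maximal_degree_vertex
  rw [← SimpleGraph.card_autCodeSpace hv.symm, ← Nat.card_eq_fintype_card]
  exact Nat.card_le_card_of_injective _ (hG.autEncode_injective v)
end

section
/- Let G be a finite connected simple graph and T a spanning tree of G. Then the number of subgraphs of G isomorphic to T satisfies s(T → G) ≤ (∏_{v ∈ V(G)} d_G(v)) / Δ_G, where d_G(v) is the degree of v in G and Δ_G is the maximum degree of G. -/
open Finset

open SimpleGraph in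
private lemma isTree_of_iso' {V W : Type*} {H : SimpleGraph V} {T : SimpleGraph W}
    (e : H ≃g T) (hT : T.IsTree) : H.IsTree := by
  rw [SimpleGraph.isTree_iff_existsUnique_path] at hT ⊢
  obtain ⟨hne, hT⟩ := hT
  have hinj : Function.Injective (e.toHom : V → W) := e.toEquiv.injective
  have hinj' : Function.Injective (e.symm.toHom : W → V) := e.symm.toEquiv.injective
  refine ⟨⟨e.symm hne.some⟩, fun u w => ?_⟩
  obtain ⟨q, hq, huq⟩ := hT (e u) (e w)
  refine ⟨(q.map e.symm.toHom).copy (e.symm_apply_apply u) (e.symm_apply_apply w), ?_, ?_⟩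
  · simpa using q.map_isPath_of_injective hinj' hq
  · intro p hp
    have h1 := huq _ (p.map_isPath_of_injective hinj hp)
    have h2 := huq _ ((((q.map e.symm.toHom).copy (e.symm_apply_apply u)
      (e.symm_apply_apply w))).map_isPath_of_injective hinj
      (by rw [SimpleGraph.Walk.isPath_copy]; exact q.map_isPath_of_injective hinj' hq))
    exact SimpleGraph.Walk.map_injective_of_injective hinj u w (h1.trans h2.symm)

open SimpleGraph in
/-- the "parent" of `a` (first step of the unique path from `a` to the root `v`)
is adjacent to `a`. -/
private lemma adj_parent {V : Type*} {H : SimpleGraph V} (hH : H.IsTree) {a v : V}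
    (hav : a ≠ v) : H.Adj a ((hH.existsUnique_path a v).choose.getVert 1) :=
  SimpleGraph.Walk.adj_snd (SimpleGraph.Walk.not_nil_of_ne hav)

open SimpleGraph in
/-- any edge of a tree is realized by a parent pointer (w.r.t. root `v`). -/
private lemma parent_of_adj {V : Type*} [DecidableEq V] {H : SimpleGraph V} (hH : H.IsTree) (v : V) {a b : V}
    (hab : H.Adj a b) :
    (a ≠ v ∧ (hH.existsUnique_path a v).choose.getVert 1 = b) ∨
    (b ≠ v ∧ (hH.existsUnique_path b v).choose.getVert 1 = a) := by
  set p := (hH.existsUnique_path a v).choose with hp_def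
  have hp : p.IsPath := (hH.existsUnique_path a v).choose_spec.1
  by_cases hb : b ∈ p.support
  · left
    have hav : a ≠ v := by
      rintro rfl
      rw [SimpleGraph.Walk.isPath_iff_eq_nil] at hp
      rw [hp] at hb
      simp only [SimpleGraph.Walk.support_nil, List.mem_singleton] at hb
      exact hab.ne' hb
    refine ⟨hav, ?_⟩
    have h2 : (SimpleGraph.Walk.cons hab SimpleGraph.Walk.nil).IsPath := by
      rw [SimpleGraph.Walk.cons_isPath_iff]
      exact ⟨SimpleGraph.Walk.IsPath.nil, by simp [hab.ne]⟩
    have ht : p.takeUntil b hb = SimpleGraph.Walk.cons hab SimpleGraph.Walk.nil :=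
      (hH.existsUnique_path a b).unique (hp.takeUntil hb) h2
    have hspec := p.take_spec hb
    rw [ht] at hspec
    rw [SimpleGraph.Walk.cons_append, SimpleGraph.Walk.nil_append] at hspec
    conv_lhs => rw [← hspec]
    simp [SimpleGraph.Walk.getVert_cons_succ]
  · right
    have hbv : b ≠ v := fun h => hb (h ▸ p.end_mem_support)
    refine ⟨hbv, ?_⟩
    have hcons : (SimpleGraph.Walk.cons hab.symm p).IsPath := hp.cons hb
    have := (hH.existsUnique_path b v).choose_spec.2 _ hcons
    rw [← this]
    simp [SimpleGraph.Walk.getVert_cons_succ]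

/-- For a finite connected simple graph `G` (with at least one edge)
and a spanning tree `T` of `G`, the number of subgraphs of `G` isomorphic to `T`
satisfies `s(T → G) ≤ (∏_v d_G(v)) / Δ_G`. -/
theorem subgraphCount_spanningTree_le {V : Type*} [Fintype V]
    (G T : SimpleGraph V) [DecidableRel G.Adj]
    (hG : G.Connected) (he : ∃ a b, G.Adj a b) (hle : T ≤ G) (hT : T.IsTree) :
    (Nat.card {H : SimpleGraph V // H ≤ G ∧ Nonempty (H ≃g T)} : ℝ) ≤
      (∏ v, (G.degree v : ℝ)) / (G.maxDegree : ℝ) := by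
  classical
  obtain ⟨a, b, hab⟩ := he
  haveI : Nonempty V := ⟨a⟩
  obtain ⟨v, hv⟩ := G.exists_maximal_degree_vertex
  have hdvpos : 0 < G.degree v := by
    rw [← hv]
    exact lt_of_lt_of_le ((G.degree_pos_iff_exists_adj a).mpr ⟨b, hab⟩)
      (G.degree_le_maxDegree a)
  set S := {H : SimpleGraph V // H ≤ G ∧ Nonempty (H ≃g T)} with hS
  have treeOf : ∀ H : S, (H : SimpleGraph V).IsTree :=
    fun H => isTree_of_iso' H.2.2.some hT
  -- the parent map
  set Φ : S → (∀ u : {u : V // u ≠ v}, (G.neighborSet u.1)) :=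
    fun H u => ⟨((treeOf H).existsUnique_path u.1 v).choose.getVert 1,
      H.2.1 (adj_parent (treeOf H) u.2)⟩ with hΦdef
  have key : ∀ (H1 H2 : S), Φ H1 = Φ H2 → ∀ a b, H1.1.Adj a b → H2.1.Adj a b := by
    intro H1 H2 hΦ a b hadj
    have hpareq : ∀ (u : V) (hu : u ≠ v),
        ((treeOf H1).existsUnique_path u v).choose.getVert 1 =
        ((treeOf H2).existsUnique_path u v).choose.getVert 1 := by
      intro u hu
      have := congrFun hΦ ⟨u, hu⟩
      exact congrArg Subtype.val this
    rcases parent_of_adj (treeOf H1) v hadj with ⟨ha, hpar⟩ | ⟨hb, hpar⟩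
    · have : ((treeOf H2).existsUnique_path a v).choose.getVert 1 = b :=
        (hpareq a ha).symm.trans hpar
      exact this ▸ adj_parent (treeOf H2) ha
    · have : ((treeOf H2).existsUnique_path b v).choose.getVert 1 = a :=
        (hpareq b hb).symm.trans hpar
      exact (this ▸ adj_parent (treeOf H2) hb).symm
  have hinj : Function.Injective Φ := by
    intro H1 H2 hΦ
    apply Subtype.ext
    ext a b
    exact ⟨key H1 H2 hΦ a b, key H2 H1 hΦ.symm a b⟩
  have hcard : Nat.card S ≤ ∏ u ∈ Finset.univ.erase v, G.degree u := by
    have h1 : Nat.card S ≤ Nat.card (∀ u : {u : V // u ≠ v}, (G.neighborSet u.1)) :=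
      Nat.card_le_card_of_injective Φ hinj
    simp only [Nat.card_eq_fintype_card, Fintype.card_pi] at h1
    rw [Nat.card_eq_fintype_card]
    refine h1.trans_eq ?_
    calc ∏ i : {u : V // u ≠ v}, Fintype.card (G.neighborSet i.1)
        = ∏ i : {u : V // u ≠ v}, G.degree i.1 :=
          Finset.prod_congr rfl fun i _ => G.card_neighborSet_eq_degree i.1
      _ = ∏ u ∈ Finset.univ.erase v, G.degree u :=
          (Finset.prod_subtype (Finset.univ.erase v) (fun u => by simp) fun u => G.degree u).symm
  have hsplit : (∏ u, (G.degree u : ℝ)) =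
      (G.degree v : ℝ) * ∏ u ∈ Finset.univ.erase v, (G.degree u : ℝ) :=
    (Finset.mul_prod_erase Finset.univ _ (Finset.mem_univ v)).symm
  rw [hsplit, hv, mul_div_cancel_left₀ _ (by exact_mod_cast hdvpos.ne')]
  calc (Nat.card S : ℝ) ≤ ((∏ u ∈ Finset.univ.erase v, G.degree u : ℕ) : ℝ) := by
        exact_mod_cast hcard
    _ = ∏ u ∈ Finset.univ.erase v, (G.degree u : ℝ) := by push_cast; rfl
end

section
/- Let G be a finite connected simple graph on n ≥ 2 vertices possessing a Hamiltonian path, with e edges. Then the number of Hamiltonian paths of G (as subgraphs) is at most (n/2) · (e/(n−1))^{n−1}. -/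
/-!
List a Hamiltonian path from one end and record, at each vertex but the last, the number of its
neighbours further along the path. Every edge is counted exactly once, at its earlier endpoint, so
these `n - 1` numbers sum to `e`, and by AM-GM their product is at most `(e / (n - 1)) ^ (n - 1)`.
On the other hand, the reciprocal of the product is the probability that the walk which always
moves to a uniformly random unvisited neighbour traces this path, so over all paths with a given
start these reciprocals sum to at most `1`. Hence each of the `n` start vertices begins at most
`(e / (n - 1)) ^ (n - 1)` listed paths, and each Hamiltonian path subgraph is listed twice, once
from either end.
-/

open Finset

theorem List.prod_le_sum_div_length_pow {l : List ℝ} (hl : ∀ x ∈ l, 0 ≤ x) :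
    l.prod ≤ (l.sum / l.length) ^ l.length := by
  rcases eq_or_ne l [] with rfl | hne
  · simp
  have hm : (l.length : ℝ) ≠ 0 := by simpa using hne
  have hz : ∀ i ∈ (univ : Finset (Fin l.length)), 0 ≤ l[i.1] :=
    fun i _ => hl _ (l.getElem_mem _)
  have amgm := Real.geom_mean_le_arith_mean_weighted univ (fun _ => (l.length : ℝ)⁻¹)
    (fun i : Fin l.length => l[i.1]) (fun _ _ => by positivity) (by simp [hm]) hz
  rw [Real.finsetProd_rpow _ _ hz, ← Finset.mul_sum, Fin.prod_univ_getElem,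
    Fin.sum_univ_getElem, inv_mul_eq_div] at amgm
  calc l.prod = (l.prod ^ (l.length⁻¹ : ℝ)) ^ l.length :=
        (Real.rpow_inv_natCast_pow (List.prod_nonneg hl) (by simpa using hne)).symm
    _ ≤ (l.sum / l.length) ^ l.length := by
        gcongr
        exact Real.rpow_nonneg (List.prod_nonneg hl) _

namespace SimpleGraph

variable {V : Type*}

section forwardDegrees

variable [DecidableEq V] (G : SimpleGraph V) [DecidableRel G.Adj]

def forwardDegrees : List V → List ℕ
  | [] => []
  | [_] => []
  | a :: b :: l => #((b :: l).toFinset.filter (G.Adj a)) :: forwardDegrees (b :: l)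

theorem forwardDegrees_cons_of_ne_nil (a : V) {l : List V} (hl : l ≠ []) :
    G.forwardDegrees (a :: l) = #(l.toFinset.filter (G.Adj a)) :: G.forwardDegrees l := by
  obtain ⟨b, l, rfl⟩ := List.exists_cons_of_ne_nil hl
  rfl

theorem length_forwardDegrees : ∀ L : List V, (G.forwardDegrees L).length = L.length - 1
  | [] | [_] => rfl
  | a :: b :: l => by simp [forwardDegrees, length_forwardDegrees (b :: l)]

theorem pos_of_mem_forwardDegrees : ∀ {L : List V}, L.IsChain G.Adj →
    ∀ {r : ℕ}, r ∈ G.forwardDegrees L → 0 < r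
  | [], _, _, h | [_], _, _, h => by simp [forwardDegrees] at h
  | a :: b :: l, hL, r, h => by
    rw [List.isChain_cons_cons] at hL
    rcases List.mem_cons.mp h with rfl | h
    · exact card_pos.mpr ⟨b, by simp [hL.1]⟩
    · exact pos_of_mem_forwardDegrees hL.2 h

theorem card_filter_sym2_cons_mem_edgeSet {s : Finset V} {a : V} (ha : a ∉ s) :
    #((s.cons a ha).sym2.filter (· ∈ G.edgeSet)) =
      #(s.filter (G.Adj a)) + #(s.sym2.filter (· ∈ G.edgeSet)) := by
  rw [sym2_cons, filter_disjUnion, card_disjUnion, filter_map, card_map]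
  congr 2
  ext b
  by_cases hb : b = a <;> simp [hb, ha]

theorem sum_forwardDegrees : ∀ {L : List V}, L.Nodup →
    (G.forwardDegrees L).sum = #(L.toFinset.sym2.filter (· ∈ G.edgeSet))
  | [], _ => by simp [forwardDegrees]
  | [a], _ => by simp [forwardDegrees, filter_singleton]
  | a :: b :: l, hL => by
    have ha : a ∉ (b :: l).toFinset := by simpa using (List.nodup_cons.mp hL).1
    have hcons : (a :: b :: l).toFinset = (b :: l).toFinset.cons a ha := by simp
    rw [hcons, card_filter_sym2_cons_mem_edgeSet, forwardDegrees, List.sum_cons,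
      sum_forwardDegrees (List.nodup_cons.mp hL).2]

variable [Fintype V]

theorem sum_forwardDegrees_le_card_edgeFinset {L : List V} (hL : L.Nodup) :
    (G.forwardDegrees L).sum ≤ #G.edgeFinset := by
  rw [G.sum_forwardDegrees hL]
  exact card_le_card fun e he => by simpa using (mem_filter.mp he).2

theorem prod_forwardDegrees_le {L : List V} (hL : L.Nodup) :
    ((G.forwardDegrees L).prod : ℝ) ≤
      (#G.edgeFinset / (L.length - 1 : ℕ) : ℝ) ^ (L.length - 1) := by
  have amgm := List.prod_le_sum_div_length_pow
    (l := (G.forwardDegrees L).map (Nat.cast : ℕ → ℝ)) (by simp)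
  rw [← Nat.cast_list_prod, ← Nat.cast_list_sum, List.length_map, length_forwardDegrees] at amgm
  refine amgm.trans ?_
  gcongr
  exact_mod_cast G.sum_forwardDegrees_le_card_edgeFinset hL

end forwardDegrees

section pathLists

variable [DecidableEq V] (G : SimpleGraph V)

def IsPathListFrom (v : V) (T : Finset V) (L : List V) : Prop :=
  L.IsChain G.Adj ∧ L.Nodup ∧ L.head? = some v ∧ L.toFinset = T

variable {G} {u v : V} {T : Finset V} {L l : List V}

namespace IsPathListFrom

theorem exists_eq_cons (h : G.IsPathListFrom v T L) : ∃ l, L = v :: l :=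
  List.head?_eq_some_iff.mp h.2.2.1

theorem head_mem (h : G.IsPathListFrom v T L) : v ∈ T := by
  rw [← h.2.2.2, List.mem_toFinset]
  exact List.mem_of_head? h.2.2.1

theorem toFinset_tail (h : G.IsPathListFrom v T (v :: l)) : l.toFinset = T.erase v := by
  rw [← h.2.2.2, List.toFinset_cons, erase_insert (by simpa using (List.nodup_cons.mp h.2.1).1)]

theorem eq_singleton (h : G.IsPathListFrom v T L) (hT : T.erase v = ∅) : L = [v] := by
  obtain ⟨l, rfl⟩ := h.exists_eq_cons
  have := h.toFinset_tail
  rw [hT, List.toFinset_eq_empty_iff] at this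
  rw [this]

theorem exists_eq_cons_cons (h : G.IsPathListFrom v T L) (hT : T.erase v ≠ ∅) :
    ∃ u l, L = v :: u :: l := by
  obtain ⟨_ | ⟨u, l⟩, rfl⟩ := h.exists_eq_cons
  · exact absurd h.toFinset_tail.symm (by simpa using hT)
  · exact ⟨u, l, rfl⟩

variable [DecidableRel G.Adj]

theorem tail (h : G.IsPathListFrom v T (v :: u :: l)) :
    u ∈ (T.erase v).filter (G.Adj v) ∧ G.IsPathListFrom u (T.erase v) (u :: l) := by
  have hc := List.isChain_cons_cons.mp h.1
  refine ⟨mem_filter.mpr ⟨?_, hc.1⟩, hc.2, (List.nodup_cons.mp h.2.1).2, rfl, h.toFinset_tail⟩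
  simp [← h.toFinset_tail]

theorem prod_forwardDegrees (h : G.IsPathListFrom v T (v :: u :: l)) :
    (G.forwardDegrees (v :: u :: l)).prod =
      #((T.erase v).filter (G.Adj v)) * (G.forwardDegrees (u :: l)).prod := by
  rw [forwardDegrees_cons_of_ne_nil _ _ (List.cons_ne_nil _ _), List.prod_cons, h.toFinset_tail]

end IsPathListFrom

variable [DecidableRel G.Adj]

theorem sum_inv_prod_forwardDegrees_eq_mul_sum_tail {P : Finset (List V)}
    (hP : ∀ L ∈ P, G.IsPathListFrom v T L) (hT : T.erase v ≠ ∅) :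
    ∑ L ∈ P, ((G.forwardDegrees L).prod : ℝ)⁻¹ =
      (#((T.erase v).filter (G.Adj v)) : ℝ)⁻¹ *
        ∑ l ∈ P.image List.tail, ((G.forwardDegrees l).prod : ℝ)⁻¹ := by
  have hinj : Set.InjOn List.tail (P : Set (List V)) := by
    intro L hL L' hL' h
    obtain ⟨_, rfl⟩ := (hP L hL).exists_eq_cons
    obtain ⟨_, rfl⟩ := (hP L' hL').exists_eq_cons
    simpa using h
  rw [sum_image hinj, mul_sum]
  refine sum_congr rfl fun L hL => ?_
  obtain ⟨u, l, rfl⟩ := (hP L hL).exists_eq_cons_cons hT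
  rw [(hP _ hL).prod_forwardDegrees, Nat.cast_mul, mul_inv, List.tail_cons]

theorem sum_inv_prod_forwardDegrees_le_one :
    ∀ {v : V} {P : Finset (List V)}, (∀ L ∈ P, G.IsPathListFrom v T L) →
      ∑ L ∈ P, ((G.forwardDegrees L).prod : ℝ)⁻¹ ≤ 1 := by
  induction T using Finset.strongInduction with
  | H T ih =>
  intro v P hP
  rcases P.eq_empty_or_nonempty with rfl | ⟨L₀, hL₀⟩
  · simp
  by_cases hT : T.erase v = ∅
  · calc ∑ L ∈ P, ((G.forwardDegrees L).prod : ℝ)⁻¹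
        ≤ ∑ L ∈ {[v]}, ((G.forwardDegrees L).prod : ℝ)⁻¹ :=
          sum_le_sum_of_subset_of_nonneg (fun L hL => by simp [(hP L hL).eq_singleton hT])
            fun _ _ _ => by positivity
      _ = 1 := by simp [forwardDegrees]
  set D := (T.erase v).filter (G.Adj v)
  have hmaps : ∀ L ∈ P, L.tail.headD v ∈ D := by
    intro L hL
    obtain ⟨u, l, rfl⟩ := (hP L hL).exists_eq_cons_cons hT
    exact (hP _ hL).tail.1
  have hfiber : ∀ u ∈ D,
      ∑ L ∈ P with L.tail.headD v = u, ((G.forwardDegrees L).prod : ℝ)⁻¹ ≤ (#D : ℝ)⁻¹ := by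
    intro u _
    have hPu : ∀ L ∈ P.filter (·.tail.headD v = u), G.IsPathListFrom v T L :=
      fun L hL => hP L (mem_filter.mp hL).1
    have htails : ∀ l ∈ (P.filter (·.tail.headD v = u)).image List.tail,
        G.IsPathListFrom u (T.erase v) l := by
      simp only [mem_image, mem_filter]
      rintro _ ⟨L, ⟨hL, rfl⟩, rfl⟩
      obtain ⟨u, l, rfl⟩ := (hP L hL).exists_eq_cons_cons hT
      exact (hP _ hL).tail.2
    rw [sum_inv_prod_forwardDegrees_eq_mul_sum_tail hPu hT]
    exact mul_le_of_le_one_right (by positivity)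
      (ih _ (erase_ssubset (hP L₀ hL₀).head_mem) htails)
  calc ∑ L ∈ P, ((G.forwardDegrees L).prod : ℝ)⁻¹
      = ∑ u ∈ D, ∑ L ∈ P with L.tail.headD v = u, ((G.forwardDegrees L).prod : ℝ)⁻¹ :=
        (sum_fiberwise_of_maps_to hmaps _).symm
    _ ≤ ∑ _u ∈ D, (#D : ℝ)⁻¹ := sum_le_sum hfiber
    _ ≤ 1 := by rw [sum_const, nsmul_eq_mul]; exact mul_inv_le_one

variable [Fintype V]

theorem card_le_of_forall_isPathListFrom {P : Finset (List V)}
    (hP : ∀ L ∈ P, G.IsPathListFrom v T L) :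
    (#P : ℝ) ≤ (#G.edgeFinset / (#T - 1 : ℕ) : ℝ) ^ (#T - 1) := by
  set B : ℝ := (#G.edgeFinset / (#T - 1 : ℕ) : ℝ) ^ (#T - 1)
  have hprod : ∀ L ∈ P, 0 < ((G.forwardDegrees L).prod : ℝ) ∧ (G.forwardDegrees L).prod ≤ B := by
    intro L hL
    have hlen : L.length = #T := by
      rw [← (hP L hL).2.2.2, List.toFinset_card_of_nodup (hP L hL).2.1]
    refine ⟨by exact_mod_cast List.prod_pos fun r hr => G.pos_of_mem_forwardDegrees (hP L hL).1 hr,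
      ?_⟩
    simpa only [hlen] using G.prod_forwardDegrees_le (hP L hL).2.1
  calc (#P : ℝ) = ∑ L ∈ P, ((G.forwardDegrees L).prod : ℝ)⁻¹ * (G.forwardDegrees L).prod := by
        rw [card_eq_sum_ones, Nat.cast_sum]
        exact sum_congr rfl fun L hL => by rw [Nat.cast_one, inv_mul_cancel₀ (hprod L hL).1.ne']
    _ ≤ ∑ L ∈ P, ((G.forwardDegrees L).prod : ℝ)⁻¹ * B :=
        sum_le_sum fun L hL => by gcongr; exact (hprod L hL).2
    _ ≤ B := by
        rw [← sum_mul]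
        exact mul_le_of_le_one_left (by positivity) (sum_inv_prod_forwardDegrees_le_one hP)

theorem card_le_of_forall_isChain_nodup_toFinset_eq_univ [Nonempty V]
    {P : Finset (List V)} (hP : ∀ L ∈ P, L.IsChain G.Adj ∧ L.Nodup ∧ L.toFinset = univ) :
    (#P : ℝ) ≤ Fintype.card V *
      (#G.edgeFinset / (Fintype.card V - 1 : ℕ) : ℝ) ^ (Fintype.card V - 1) := by
  obtain ⟨v₀⟩ := ‹Nonempty V›
  have hfiber : ∀ v, ∀ L ∈ P.filter (·.headD v₀ = v), G.IsPathListFrom v univ L := by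
    intro v L hL
    obtain ⟨hLP, rfl⟩ := mem_filter.mp hL
    obtain ⟨hc, hnd, huniv⟩ := hP L hLP
    obtain ⟨a, l, rfl⟩ := List.exists_cons_of_ne_nil (l := L) (by
      rintro rfl
      exact univ_nonempty.ne_empty (by simpa using huniv.symm))
    exact ⟨hc, hnd, rfl, huniv⟩
  calc (#P : ℝ) = ∑ v, (#(P.filter (·.headD v₀ = v)) : ℝ) := by
        rw [card_eq_sum_card_fiberwise (t := (univ : Finset V)) fun _ _ => mem_coe.mpr (mem_univ _),
          Nat.cast_sum]
    _ ≤ ∑ _v : V, (#G.edgeFinset / (Fintype.card V - 1 : ℕ) : ℝ) ^ (Fintype.card V - 1) :=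
        sum_le_sum fun v _ => card_le_of_forall_isPathListFrom (hfiber v)
    _ = _ := by rw [sum_const, card_univ, nsmul_eq_mul]

end pathLists

theorem isChain_ofFn_of_hom {G : SimpleGraph V} {n : ℕ} (f : pathGraph n →g G) :
    (List.ofFn f).IsChain G.Adj :=
  List.isChain_ofFn.mpr fun i hi => f.map_adj (by simp [pathGraph_adj])

theorem Iso.eq_of_coeFn_eq {W : Type*} {G : SimpleGraph W} {H₁ H₂ : SimpleGraph V}
    (φ₁ : G ≃g H₁) (φ₂ : G ≃g H₂) (h : ⇑φ₁ = ⇑φ₂) : H₁ = H₂ := by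
  ext a b
  obtain ⟨a, rfl⟩ := φ₁.surjective a
  obtain ⟨b, rfl⟩ := φ₁.surjective b
  rw [φ₁.map_adj_iff, h, φ₂.map_adj_iff]

def pathGraph.revIso (n : ℕ) : pathGraph n ≃g pathGraph n where
  toEquiv := Fin.revPerm
  map_rel_iff' {i j} := by
    simp only [pathGraph_adj, Fin.revPerm_apply, Fin.val_rev]
    omega

variable [Fintype V] (G : SimpleGraph V)

abbrev HamiltonianPathSubgraph :=
  {H : SimpleGraph V // H ≤ G ∧ Nonempty (H ≃g pathGraph (Fintype.card V))}

variable {G}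

namespace HamiltonianPathSubgraph

noncomputable def traversal (H : G.HamiltonianPathSubgraph) (b : Bool) :
    pathGraph (Fintype.card V) ≃g H.1 :=
  bif b then H.2.2.some.symm else (pathGraph.revIso _).trans H.2.2.some.symm

theorem injective_traversal (hn : 2 ≤ Fintype.card V) :
    Function.Injective fun p : G.HamiltonianPathSubgraph × Bool => ⇑(p.1.traversal p.2) := by
  rintro ⟨H, b⟩ ⟨H', b'⟩ h
  obtain rfl : H = H' := Subtype.ext (Iso.eq_of_coeFn_eq _ _ h)
  have h0 := congrFun h ⟨0, by omega⟩
  have hrev : Fin.revPerm (⟨0, by omega⟩ : Fin (Fintype.card V)) ≠ ⟨0, by omega⟩ := by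
    simp only [Fin.revPerm_apply, ne_eq, Fin.ext_iff, Fin.val_rev]
    omega
  cases b <;> cases b' <;> simp only [traversal, cond_true, cond_false, RelIso.trans_apply] at h0
  · rfl
  · exact absurd (H.2.2.some.symm.injective h0) hrev
  · exact absurd (H.2.2.some.symm.injective h0).symm hrev
  · rfl

theorem isChain_nodup_toFinset_ofFn_traversal [DecidableEq V] (H : G.HamiltonianPathSubgraph)
    (b : Bool) :
    (List.ofFn (H.traversal b)).IsChain G.Adj ∧ (List.ofFn (H.traversal b)).Nodup ∧
      (List.ofFn (H.traversal b)).toFinset = univ :=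
  ⟨isChain_ofFn_of_hom ((Hom.ofLE H.2.1).comp (H.traversal b).toHom),
    List.nodup_ofFn.mpr (H.traversal b).injective,
    eq_univ_of_forall fun v => by simpa [List.mem_ofFn] using (H.traversal b).surjective v⟩

end HamiltonianPathSubgraph

end SimpleGraph

open SimpleGraph

theorem count_hamiltonian_paths_le_general {V : Type*} [Fintype V]
    (G : SimpleGraph V) [DecidableRel G.Adj]
    (hn : 2 ≤ Fintype.card V) :
    (Nat.card {H : SimpleGraph V //
        H ≤ G ∧ Nonempty (H ≃g pathGraph (Fintype.card V))} : ℝ) ≤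
      ((Fintype.card V : ℝ) / 2) *
        ((G.edgeFinset.card : ℝ) / ((Fintype.card V : ℝ) - 1)) ^ (Fintype.card V - 1) := by
  classical
  have : Nonempty V := Fintype.card_pos_iff.mp (by omega)
  set P := (univ : Finset (G.HamiltonianPathSubgraph × Bool)).image
    fun p => List.ofFn (p.1.traversal p.2)
  have hP : #P = 2 * Nat.card G.HamiltonianPathSubgraph := by
    rw [card_image_of_injective _ fun p q h =>
      HamiltonianPathSubgraph.injective_traversal hn (List.ofFn_injective h), card_univ,
      Fintype.card_prod, Fintype.card_bool, Nat.card_eq_fintype_card, mul_comm]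
  have hbound := G.card_le_of_forall_isChain_nodup_toFinset_eq_univ (P := P) (by
    simp only [P, mem_image]
    rintro _ ⟨⟨H, b⟩, -, rfl⟩
    exact H.isChain_nodup_toFinset_ofFn_traversal b)
  rw [hP, Nat.cast_mul, Nat.cast_sub (by omega : 1 ≤ Fintype.card V), Nat.cast_one] at hbound
  change (Nat.card G.HamiltonianPathSubgraph : ℝ) ≤ _
  linarith

/-- (Lovász) If `G` is a connected graph on `n ≥ 2` vertices with `e`
edges having a Hamiltonian path, then the number of Hamiltonian paths of `G`
(as subgraphs) is at most `(n/2) · (e/(n−1))^(n−1)`. -/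
theorem count_hamiltonian_paths_le {V : Type*} [Fintype V] [DecidableEq V]
    (G : SimpleGraph V) [DecidableRel G.Adj]
    (hG : G.Connected) (hn : 2 ≤ Fintype.card V)
    (hham : ∃ H : SimpleGraph V, H ≤ G ∧ Nonempty (H ≃g pathGraph (Fintype.card V))) :
    (Nat.card {H : SimpleGraph V //
        H ≤ G ∧ Nonempty (H ≃g pathGraph (Fintype.card V))} : ℝ) ≤
      ((Fintype.card V : ℝ) / 2) *
        ((G.edgeFinset.card : ℝ) / ((Fintype.card V : ℝ) - 1)) ^ (Fintype.card V - 1) :=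
  count_hamiltonian_paths_le_general G hn
end
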